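/- arXiv:1910.02816 — 5 statements merged into one kernel-verified Lean document; each statement's English description precedes it below -/
import Mathlib

section
/- The collection {T ⊆ [n] : T ≤ S} (where T ≤ S means #T = #S and, writing T = {a_1 < ... < a_k}, S = {b_1 < ... < b_k}, we have a_i ≤ b_i for all i) forms the set of bases of a matroid on [n]. -/
/-!
Write `T_{≥t}` for `{x ∈ T | t ≤ x}`. Then `T ≤ S` holds iff `#T = #S` and `#T_{≥t} ≤ #S_{≥t}`
for every threshold `t`: if the `i`-th smallest element of `S` is below the `i`-th smallest
element `t` of `T`, then `T_{≥t}` has more elements than `S_{≥t}`.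

For the exchange, remove `a ∈ A \ B` from `A` and add the least element `b` of `B \ A`. For every
threshold `t` the count of the new set is at most that of `A`, except when `a < t ≤ b`, where it
is one more; but then all of `B \ A` lies above `t` while `a` does not, and since
`#(A \ B) = #(B \ A)` this forces `#A_{≥t} < #B_{≥t}`.
-/

/-- Domination order on finsets of `Fin n`: `T ≤ S` iff they have the same
cardinality and the `i`-th smallest element of `T` is at most the `i`-th
smallest element of `S` for every `i`. -/
def SchubertDom {n : ℕ} (T S : Finset (Fin n)) : Prop :=
  List.Forall₂ (· ≤ ·) (T.sort (· ≤ ·)) (S.sort (· ≤ ·))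

open Finset

namespace Finset

variable {α : Type*}

theorem card_filter_lt_card_filter_of_card_eq [DecidableEq α] {A B : Finset α}
    (hAB : #A = #B) (p : α → Prop) [DecidablePred p] (hp : ∀ x ∈ B \ A, p x) {a : α}
    (ha : a ∈ A \ B) (hpa : ¬ p a) : #{x ∈ A | p x} < #{x ∈ B | p x} := by
  have split (C D : Finset α) : #{x ∈ C | p x} = #{x ∈ C \ D | p x} + #{x ∈ C ∩ D | p x} := by
    rw [← card_union_of_disjoint (disjoint_filter_filter (disjoint_sdiff_inter C D)),
      ← filter_union, sdiff_union_inter]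
  calc #{x ∈ A | p x} = #{x ∈ A \ B | p x} + #{x ∈ A ∩ B | p x} := split A B
    _ < #(A \ B) + #{x ∈ A ∩ B | p x} :=
      Nat.add_lt_add_right (card_lt_card (filter_ssubset.2 ⟨a, ha, hpa⟩)) _
    _ = #{x ∈ B \ A | p x} + #{x ∈ B ∩ A | p x} := by
      rw [card_sdiff_comm hAB, inter_comm, filter_true_of_mem hp]
    _ = #{x ∈ B | p x} := (split B A).symm

section LinearOrder

variable [LinearOrder α]

theorem card_filter_eq_card_filter_orderEmbOfFin (s : Finset α) {k : ℕ} (h : #s = k)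
    (p : α → Prop) [DecidablePred p] : #{x ∈ s | p x} = #{i | p (s.orderEmbOfFin h i)} := by
  conv_lhs => rw [← s.map_orderEmbOfFin_univ h]
  rw [filter_map, card_map]
  rfl

theorem forall₂_sort_iff_orderEmbOfFin (r : α → α → Prop) {T S : Finset α} (h : #T = #S) :
    List.Forall₂ r (T.sort (· ≤ ·)) (S.sort (· ≤ ·)) ↔
      ∀ i, r (T.orderEmbOfFin h i) (S.orderEmbOfFin rfl i) := by
  simp only [List.forall₂_iff_get, length_sort, h, orderEmbOfFin_apply, true_and]
  exact ⟨fun H i => H i i.2 i.2, fun H i _ hi => H ⟨i, hi⟩⟩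

theorem forall₂_sort_le_iff {T S : Finset α} :
    List.Forall₂ (· ≤ ·) (T.sort (· ≤ ·)) (S.sort (· ≤ ·)) ↔
      #T = #S ∧ ∀ t, #{x ∈ T | t ≤ x} ≤ #{x ∈ S | t ≤ x} := by
  by_cases h : #T = #S
  swap
  · exact iff_of_false (fun H => h (by simpa using H.length_eq)) (fun H => h H.1)
  rw [forall₂_sort_iff_orderEmbOfFin _ h]
  simp only [h, true_and, card_filter_eq_card_filter_orderEmbOfFin T h,
    card_filter_eq_card_filter_orderEmbOfFin S rfl]
  set f := T.orderEmbOfFin h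
  set g := S.orderEmbOfFin rfl
  refine ⟨fun hfg t => card_le_card fun i => ?_, fun hcount i => ?_⟩
  · simpa using fun hti => hti.trans (hfg i)
  by_contra! hgf
  have hIci : Ici i ⊆ ({j | f i ≤ f j} : Finset _) := fun j hj => by
    simpa using f.monotone (mem_Ici.1 hj)
  have hIoi : ({j | f i ≤ g j} : Finset _) ⊆ Ioi i := fun j hj => by
    simpa using g.lt_iff_lt.1 (hgf.trans_le (mem_filter.1 hj).2)
  have hIoi_lt_Ici : #(Ioi i) < #(Ici i) := by
    simp only [Fin.card_Ioi, Fin.card_Ici]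
    omega
  have := hcount (f i)
  have := card_le_card hIci
  have := card_le_card hIoi
  omega

theorem card_filter_insert_erase_le_max {A B : Finset α} (hAB : #A = #B) {a b : α}
    (ha : a ∈ A \ B) (hb : ∀ x ∈ B \ A, b ≤ x) (t : α) :
    #{x ∈ insert b (A.erase a) | t ≤ x} ≤ max #{x ∈ A | t ≤ x} #{x ∈ B | t ≤ x} := by
  have hle_succ : #{x ∈ insert b (A.erase a) | t ≤ x} ≤ #{x ∈ A.erase a | t ≤ x} + 1 := by
    rw [filter_insert]
    split_ifs
    exacts [card_insert_le _ _, Nat.le_succ _]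
  by_cases htb : t ≤ b
  · by_cases hta : t ≤ a
    · refine le_max_of_le_left (hle_succ.trans_eq ?_)
      rw [filter_erase, card_erase_add_one (mem_filter.2 ⟨(mem_sdiff.1 ha).1, hta⟩)]
    · refine le_max_of_le_right (hle_succ.trans ?_)
      rw [filter_erase, erase_eq_of_notMem (fun h => hta (mem_filter.1 h).2)]
      exact card_filter_lt_card_filter_of_card_eq hAB _ (fun x hx => htb.trans (hb x hx)) ha hta
  · refine le_max_of_le_left (card_le_card fun x hx => ?_)
    obtain ⟨hx, htx⟩ := mem_filter.1 hx
    rcases mem_insert.1 hx with rfl | hx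
    exacts [absurd htx htb, mem_filter.2 ⟨mem_of_mem_erase hx, htx⟩]

end LinearOrder

end Finset

theorem schubertDom_iff {n : ℕ} {T S : Finset (Fin n)} :
    SchubertDom T S ↔ #T = #S ∧ ∀ t, #{x ∈ T | t ≤ x} ≤ #{x ∈ S | t ≤ x} :=
  forall₂_sort_le_iff

/-- The collection `{T ⊆ [n] : T ≤ S}` forms the set of bases of a matroid on `[n]`:
it is nonempty and satisfies the basis exchange axiom. -/
theorem schubert_matroid_basis_axioms (n : ℕ) (S : Finset (Fin n)) :
    (∃ T : Finset (Fin n), SchubertDom T S) ∧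
    (∀ A B : Finset (Fin n), SchubertDom A S → SchubertDom B S →
      ∀ a ∈ A \ B, ∃ b ∈ B \ A, SchubertDom (insert b (A.erase a)) S) := by
  refine ⟨⟨S, List.forall₂_refl _⟩, fun A B hA hB a ha => ?_⟩
  rw [schubertDom_iff] at hA hB
  have hAB : #A = #B := hA.1.trans hB.1.symm
  have hBA : (B \ A).Nonempty := by
    rw [← card_pos, ← card_sdiff_comm hAB]
    exact card_pos.2 ⟨a, ha⟩
  have hb := mem_sdiff.1 (min'_mem _ hBA)
  refine ⟨(B \ A).min' hBA, min'_mem _ _, schubertDom_iff.2 ⟨?_, fun t => ?_⟩⟩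
  · rw [card_insert_of_notMem (fun h => hb.2 (mem_of_mem_erase h)),
      card_erase_add_one (mem_sdiff.1 ha).1, hA.1]
  · exact (card_filter_insert_erase_le_max hAB ha (fun x => min'_le _ x) t).trans
      (max_le (hA.2 t) (hB.2 t))
end

section
/- Let f : 2^{[n]} → ℝ be submodular with f(∅) = 0. Then every vertex of the base polytope B_f is of the form x(w) for some permutation w of [n], where x(w)_{w_k} = f({w_1,...,w_k}) − f({w_1,...,w_{k−1}}); conversely every such point x(w) is a vertex of B_f. -/
/-! Greedy vectors lie in `B_f` by submodularity, and `x(w)` is the only point of `B_f` on which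
all prefixes `{w_1, …, w_k}` are tight, so it is a vertex. Conversely, at a vertex `x` the tight
sets form a lattice that separates any two coordinates (otherwise `x ± ε (e_i - e_j)` stays in
`B_f`). Hence the smallest tight sets `D(i) ∋ i` are distinct, `j ∈ D(i)` forces `D(j) ⊂ D(i)`, and
any ordering `w` by increasing `#D(i)` makes every prefix a union of `D(i)`s, hence tight; this
pins `x` down as `x(w)`. -/

/-- The greedy vector `x(w)`: `x_{w_k} = f({w_1,…,w_k}) − f({w_1,…,w_{k−1}})`. -/
noncomputable def greedyVec {n : ℕ} (f : Finset (Fin n) → ℝ) (w : Equiv.Perm (Fin n)) :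
    Fin n → ℝ :=
  fun i => f ((Finset.Iic (w.symm i)).image w) - f ((Finset.Iio (w.symm i)).image w)

/-- The base polytope of a set function `f` on subsets of `[n]`. -/
def basePolytope {n : ℕ} (f : Finset (Fin n) → ℝ) : Set (Fin n → ℝ) :=
  {x | (∑ i, x i) = f Finset.univ ∧
    ∀ S : Finset (Fin n), S ⊂ Finset.univ → ∑ i ∈ S, x i ≤ f S}

open Finset Filter Topology

section TightSets

variable {ι : Type*} {f : Finset ι → ℝ} {x : ι → ℝ}

def IsTight (f : Finset ι → ℝ) (x : ι → ℝ) (S : Finset ι) : Prop :=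
  ∑ i ∈ S, x i = f S

theorem isTight_empty (h0 : f ∅ = 0) : IsTight f x ∅ := by
  simp [IsTight, h0]

theorem IsTight.union_inter [DecidableEq ι]
    (hsub : ∀ S T : Finset ι, f (S ∪ T) + f (S ∩ T) ≤ f S + f T)
    (hx : ∀ S, ∑ i ∈ S, x i ≤ f S) {S T : Finset ι} (hS : IsTight f x S) (hT : IsTight f x T) :
    IsTight f x (S ∪ T) ∧ IsTight f x (S ∩ T) := by
  have hsum := sum_union_inter (s₁ := S) (s₂ := T) (f := x)
  unfold IsTight at hS hT ⊢
  constructor <;> linarith [hx (S ∪ T), hx (S ∩ T), hsub S T]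

variable [Fintype ι] [DecidableEq ι]

section MinTightSet

open Classical

noncomputable def minTightSet (f : Finset ι → ℝ) (x : ι → ℝ) (i : ι) : Finset ι :=
  ({S | IsTight f x S ∧ i ∈ S} : Finset (Finset ι)).inf id

theorem mem_minTightSet (i : ι) : i ∈ minTightSet f x i :=
  inf_induction (p := (i ∈ ·)) (mem_univ i) (fun _ ha _ hb => mem_inter.2 ⟨ha, hb⟩)
    fun _ hS => (mem_filter.1 hS).2.2

theorem minTightSet_subset {i : ι} {S : Finset ι} (hS : IsTight f x S) (hi : i ∈ S) :
    minTightSet f x i ⊆ S :=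
  inf_le (f := id) (mem_filter.2 ⟨mem_univ S, hS, hi⟩)

theorem isTight_minTightSet (hsub : ∀ S T : Finset ι, f (S ∪ T) + f (S ∩ T) ≤ f S + f T)
    (hx : ∀ S, ∑ i ∈ S, x i ≤ f S) (huniv : IsTight f x univ) (i : ι) :
    IsTight f x (minTightSet f x i) :=
  inf_induction huniv (fun _ ha _ hb => (ha.union_inter hsub hx hb).2)
    fun _ hS => (mem_filter.1 hS).2.1

theorem minTightSet_ssubset_of_mem
    (hsub : ∀ S T : Finset ι, f (S ∪ T) + f (S ∩ T) ≤ f S + f T)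
    (hx : ∀ S, ∑ i ∈ S, x i ≤ f S) (huniv : IsTight f x univ) {i j : ι}
    (hj : j ∈ minTightSet f x i) (hsep : ∃ S, IsTight f x S ∧ ¬(i ∈ S ↔ j ∈ S)) :
    minTightSet f x j ⊂ minTightSet f x i := by
  obtain ⟨S, hS, hij⟩ := hsep
  refine ssubset_of_subset_of_ne
    (minTightSet_subset (isTight_minTightSet hsub hx huniv i) hj) fun heq => hij ⟨?_, ?_⟩
  · exact fun hi => minTightSet_subset hS hi hj
  · exact fun hj' => minTightSet_subset hS hj' (heq ▸ mem_minTightSet (f := f) (x := x) i)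

end MinTightSet

theorem isTight_of_minTightSet_subset
    (hsub : ∀ S T : Finset ι, f (S ∪ T) + f (S ∩ T) ≤ f S + f T)
    (hx : ∀ S, ∑ i ∈ S, x i ≤ f S) (huniv : IsTight f x univ) (h0 : f ∅ = 0) {T : Finset ι}
    (hT : ∀ i ∈ T, minTightSet f x i ⊆ T) : IsTight f x T := by
  have hT_sup : T = T.sup (minTightSet f x) :=
    le_antisymm (fun i hi => mem_sup.2 ⟨i, hi, mem_minTightSet i⟩) (Finset.sup_le hT)
  rw [hT_sup]
  exact sup_induction (isTight_empty h0) (fun _ ha _ hb => (ha.union_inter hsub hx hb).1)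
    fun i _ => isTight_minTightSet hsub hx huniv i

end TightSets

theorem Tuple.sort_symm_lt_of_lt {n : ℕ} {α : Type*} [LinearOrder α] (g : Fin n → α)
    {i j : Fin n} (h : g i < g j) : (Tuple.sort g).symm i < (Tuple.sort g).symm j :=
  lt_of_not_ge fun hle => h.not_ge (by simpa using Tuple.monotone_sort g hle)

section BasePolytope

variable {n : ℕ} {f : Finset (Fin n) → ℝ}

theorem mem_basePolytope_iff {x : Fin n → ℝ} :
    x ∈ basePolytope f ↔ ∑ i, x i = f univ ∧ ∀ S, ∑ i ∈ S, x i ≤ f S := by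
  refine ⟨fun ⟨huniv, hle⟩ => ⟨huniv, fun S => ?_⟩, fun ⟨huniv, hle⟩ => ⟨huniv, fun S _ => hle S⟩⟩
  rcases eq_or_ne S univ with rfl | hS
  · exact huniv.le
  · exact hle S (ssubset_univ_iff.2 hS)

def prefixSet (w : Equiv.Perm (Fin n)) (k : ℕ) : Finset (Fin n) :=
  {i | (w.symm i : ℕ) < k}

variable {w : Equiv.Perm (Fin n)}

@[simp]
theorem mem_prefixSet {k : ℕ} {i : Fin n} : i ∈ prefixSet w k ↔ (w.symm i : ℕ) < k := by
  simp [prefixSet]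

theorem prefixSet_zero : prefixSet w 0 = ∅ := by
  ext; simp

theorem prefixSet_self : prefixSet w n = univ := by
  ext i; simp

theorem prefixSet_succ {k : ℕ} (hk : k < n) :
    prefixSet w (k + 1) = insert (w ⟨k, hk⟩) (prefixSet w k) := by
  ext i
  simp only [mem_insert, mem_prefixSet, ← w.symm_apply_eq, Fin.ext_iff]
  omega

theorem apply_notMem_prefixSet {k : ℕ} (hk : k < n) : w ⟨k, hk⟩ ∉ prefixSet w k := by
  simp

theorem greedyVec_apply (f : Finset (Fin n) → ℝ) (w : Equiv.Perm (Fin n)) {k : ℕ} (hk : k < n) :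
    greedyVec f w (w ⟨k, hk⟩) = f (prefixSet w (k + 1)) - f (prefixSet w k) := by
  have hIic : (Iic ⟨k, hk⟩).image w = prefixSet w (k + 1) := by
    ext i
    rw [← w.coe_toEmbedding, ← map_eq_image, mem_map_equiv, mem_Iic, mem_prefixSet,
      Nat.lt_succ_iff, Fin.le_iff_val_le_val]
  have hIio : (Iio ⟨k, hk⟩).image w = prefixSet w k := by
    ext i
    rw [← w.coe_toEmbedding, ← map_eq_image, mem_map_equiv, mem_Iio, mem_prefixSet, Fin.lt_def]
  simp [greedyVec, hIic, hIio]

theorem sum_prefixSet_greedyVec (f : Finset (Fin n) → ℝ) (w : Equiv.Perm (Fin n)) {k : ℕ}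
    (hk : k ≤ n) : ∑ i ∈ prefixSet w k, greedyVec f w i = f (prefixSet w k) - f ∅ := by
  induction k with
  | zero => simp [prefixSet_zero]
  | succ k ih =>
    rw [prefixSet_succ hk, sum_insert (apply_notMem_prefixSet hk), ih (Nat.le_of_succ_le hk),
      greedyVec_apply f w hk, prefixSet_succ hk]
    ring

theorem sum_inter_prefixSet_greedyVec_le
    (hsub : ∀ S T : Finset (Fin n), f (S ∪ T) + f (S ∩ T) ≤ f S + f T)
    (w : Equiv.Perm (Fin n)) (S : Finset (Fin n)) {k : ℕ} (hk : k ≤ n) :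
    ∑ i ∈ S ∩ prefixSet w k, greedyVec f w i ≤ f (S ∩ prefixSet w k) - f ∅ := by
  induction k with
  | zero => simp [prefixSet_zero]
  | succ k ih =>
    have hk' := apply_notMem_prefixSet (w := w) hk
    rw [prefixSet_succ hk]
    by_cases hS : w ⟨k, hk⟩ ∈ S
    · have hsubk := hsub (prefixSet w k) (insert (w ⟨k, hk⟩) (S ∩ prefixSet w k))
      rw [union_insert, union_eq_left.2 inter_subset_right, inter_insert_of_notMem hk',
        inter_eq_right.2 inter_subset_right] at hsubk
      rw [inter_insert_of_mem hS, sum_insert (fun h => hk' (mem_inter.1 h).2),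
        greedyVec_apply f w hk, prefixSet_succ hk]
      linarith [ih (Nat.le_of_succ_le hk)]
    · rw [inter_insert_of_notMem hS]
      exact ih (Nat.le_of_succ_le hk)

theorem greedyVec_mem_basePolytope
    (hsub : ∀ S T : Finset (Fin n), f (S ∪ T) + f (S ∩ T) ≤ f S + f T) (h0 : f ∅ = 0)
    (w : Equiv.Perm (Fin n)) : greedyVec f w ∈ basePolytope f := by
  refine mem_basePolytope_iff.2 ⟨?_, fun S => ?_⟩
  · simpa [prefixSet_self, h0] using sum_prefixSet_greedyVec f w le_rfl
  · simpa [prefixSet_self, h0] using sum_inter_prefixSet_greedyVec_le hsub w S le_rfl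

theorem eq_greedyVec_of_sum_prefixSet {y : Fin n → ℝ}
    (hy : ∀ k ≤ n, ∑ i ∈ prefixSet w k, y i = f (prefixSet w k)) : y = greedyVec f w := by
  funext i
  obtain ⟨⟨k, hk⟩, rfl⟩ := w.surjective i
  have h := hy (k + 1) hk
  rw [prefixSet_succ hk, sum_insert (apply_notMem_prefixSet hk), hy k hk.le] at h
  rw [greedyVec_apply f w hk, prefixSet_succ hk, ← h]
  ring

theorem greedyVec_mem_extremePoints
    (hsub : ∀ S T : Finset (Fin n), f (S ∪ T) + f (S ∩ T) ≤ f S + f T) (h0 : f ∅ = 0)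
    (w : Equiv.Perm (Fin n)) : greedyVec f w ∈ (basePolytope f).extremePoints ℝ := by
  refine mem_extremePoints_iff_left.2 ⟨greedyVec_mem_basePolytope hsub h0 w, ?_⟩
  rintro y hy z hz ⟨a, b, ha, hb, hab, hyz⟩
  refine eq_greedyVec_of_sum_prefixSet fun k hk => ?_
  have hx := sum_prefixSet_greedyVec f w hk
  rw [h0, sub_zero, ← hyz] at hx
  simp only [Pi.add_apply, Pi.smul_apply, smul_eq_mul, sum_add_distrib, ← mul_sum] at hx
  have hyk := (mem_basePolytope_iff.1 hy).2 (prefixSet w k)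
  have hzk := (mem_basePolytope_iff.1 hz).2 (prefixSet w k)
  have hF : f (prefixSet w k) = a * f (prefixSet w k) + b * f (prefixSet w k) := by
    rw [← add_mul, hab, one_mul]
  refine le_antisymm hyk (le_of_not_gt fun hlt => ?_)
  nlinarith [mul_lt_mul_of_pos_left hlt ha, mul_le_mul_of_nonneg_left hzk hb.le]

theorem eq_zero_of_sum_eq_zero_of_isTight {x d : Fin n → ℝ}
    (hx : x ∈ (basePolytope f).extremePoints ℝ)
    (hd : ∀ S, IsTight f x S → ∑ i ∈ S, d i = 0) : d = 0 := by
  have hxB := mem_basePolytope_iff.1 hx.1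
  have hsum (t : ℝ) (S : Finset (Fin n)) :
      ∑ i ∈ S, (x + t • d) i = ∑ i ∈ S, x i + t * ∑ i ∈ S, d i := by
    simp [sum_add_distrib, mul_sum]
  have hle (S : Finset (Fin n)) : ∀ᶠ t in 𝓝 (0 : ℝ), ∑ i ∈ S, (x + t • d) i ≤ f S := by
    by_cases hS : IsTight f x S
    · exact .of_forall fun t => by rw [hsum, hd S hS, mul_zero, add_zero]; exact hS.le
    · have hlim : Tendsto (fun t : ℝ => ∑ i ∈ S, (x + t • d) i) (𝓝 0) (𝓝 (∑ i ∈ S, x i)) := by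
        simp only [hsum]
        simpa using ((tendsto_id (x := 𝓝 (0 : ℝ))).mul_const (∑ i ∈ S, d i)).const_add
          (∑ i ∈ S, x i)
      exact (hlim.eventually_lt_const (lt_of_le_of_ne (hxB.2 S) hS)).mono fun _ h => h.le
  have hmem : ∀ᶠ t in 𝓝 (0 : ℝ), x + t • d ∈ basePolytope f := by
    filter_upwards [eventually_all.2 hle] with t ht
    refine mem_basePolytope_iff.2 ⟨?_, ht⟩
    rw [hsum, hd univ hxB.1, mul_zero, add_zero, hxB.1]
  have hmem_neg : ∀ᶠ t in 𝓝 (0 : ℝ), x + (-t) • d ∈ basePolytope f :=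
    (continuous_neg.tendsto' (0 : ℝ) 0 neg_zero).eventually hmem
  obtain ⟨t, ⟨hpos, hneg⟩, ht⟩ :=
    (((hmem.and hmem_neg).filter_mono nhdsWithin_le_nhds).and self_mem_nhdsWithin).exists
      (f := 𝓝[≠] (0 : ℝ))
  have hx_mid : x ∈ openSegment ℝ (x + t • d) (x + (-t) • d) :=
    ⟨1 / 2, 1 / 2, by norm_num, by norm_num, by norm_num, by module⟩
  have htd : t • d = 0 := add_eq_left.1 ((mem_extremePoints_iff_left.1 hx).2 _ hpos _ hneg hx_mid)
  exact (smul_eq_zero.1 htd).resolve_left ht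

theorem exists_isTight_separating {x : Fin n → ℝ} (hx : x ∈ (basePolytope f).extremePoints ℝ)
    {i j : Fin n} (hij : i ≠ j) : ∃ S, IsTight f x S ∧ ¬(i ∈ S ↔ j ∈ S) := by
  by_contra! h
  have hd := eq_zero_of_sum_eq_zero_of_isTight hx (d := Pi.single i 1 - Pi.single j 1)
    fun S hS => by simp [sum_sub_distrib, sum_pi_single', h S hS]
  simpa [hij] using congrFun hd i

theorem isTight_prefixSet_sort
    (hsub : ∀ S T : Finset (Fin n), f (S ∪ T) + f (S ∩ T) ≤ f S + f T) (h0 : f ∅ = 0)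
    {x : Fin n → ℝ} (hx : x ∈ (basePolytope f).extremePoints ℝ) (k : ℕ) :
    IsTight f x (prefixSet (Tuple.sort fun i => #(minTightSet f x i)) k) := by
  obtain ⟨huniv, hle⟩ := mem_basePolytope_iff.1 hx.1
  refine isTight_of_minTightSet_subset hsub hle huniv h0 fun i hi j hj => ?_
  rcases eq_or_ne j i with rfl | hji
  · exact hi
  have hcard := card_lt_card
    (minTightSet_ssubset_of_mem hsub hle huniv hj (exists_isTight_separating hx hji.symm))
  rw [mem_prefixSet] at hi ⊢
  exact (Fin.lt_def.1 (Tuple.sort_symm_lt_of_lt _ hcard)).trans hi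

end BasePolytope

/-- (Edmonds) For a submodular `f` with `f(∅) = 0`, the vertices (extreme points)
of the base polytope `B_f` are exactly the greedy vectors `x(w)` for
permutations `w` of `[n]`. -/
theorem basePolytope_extremePoints (n : ℕ) (f : Finset (Fin n) → ℝ)
    (hsub : ∀ S T : Finset (Fin n), f (S ∪ T) + f (S ∩ T) ≤ f S + f T)
    (h0 : f ∅ = 0) :
    Set.extremePoints ℝ (basePolytope f) =
      {x | ∃ w : Equiv.Perm (Fin n), x = greedyVec f w} := by
  ext x
  constructor
  · intro hx
    exact ⟨_, eq_greedyVec_of_sum_prefixSet fun k _ => isTight_prefixSet_sort hsub h0 hx k⟩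
  · rintro ⟨w, rfl⟩
    exact greedyVec_mem_extremePoints hsub h0 w
end

section
/- Let α be a composition of length n and w(α) the minimal-length permutation with λ(α)·w(α) = α, where λ(α) is the decreasing rearrangement of α and (v·w)_i = v_{w(i)}. Then for any permutation σ ≤ w(α) in Bruhat order, the composition β = λ(α)·σ satisfies w(β) ≤ w(α) in Bruhat order. -/
/-!
If `τ` inverts a tie of `lam ∘ τ` (`x < y`, `lam (τ x) = lam (τ y)`, `τ y < τ x`), then
`τ * swap x y` has the same composition `lam ∘ _` and lies strictly below `τ` in Bruhat order:
`u ≤ u * swap i j` whenever `i < j` and `u i < u j`, by splitting the transposition until it is a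
cover, where exactly one inversion is gained. Descending from `σ` this way ends at a permutation
inverting no tie; that permutation is unique in its fibre, hence is the length-minimal `wβ`.
So `wβ ≤ σ ≤ wα`.
-/

/-- The Coxeter length of a permutation of `Fin n`, i.e. its inversion number. -/
def permLength {n : ℕ} (w : Equiv.Perm (Fin n)) : ℕ :=
  ((Finset.univ : Finset (Fin n × Fin n)).filter
    (fun p => p.1 < p.2 ∧ w p.2 < w p.1)).card

/-- The Bruhat order on `S_n`: the reflexive-transitive closure of the covering
relation `u ⋖ u·t_{ij}` with the length increasing by exactly one. -/
def BruhatLE {n : ℕ} (u w : Equiv.Perm (Fin n)) : Prop :=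
  Relation.ReflTransGen
    (fun a b => (∃ i j : Fin n, i ≠ j ∧ b = a * Equiv.swap i j) ∧
      permLength b = permLength a + 1) u w

open Equiv

variable {n : ℕ}

def permInversions (w : Perm (Fin n)) : Finset (Fin n × Fin n) :=
  Finset.univ.filter fun p => p.1 < p.2 ∧ w p.2 < w p.1

/-- When no `u k` with `i < k < j` lies between `u i` and `u j`, this involution matches the
inversions of `u` with those of `u * swap i j` other than `(i, j)`. -/
def swapPair (i j : Fin n) (x : Fin n × Fin n) : Fin n × Fin n :=
  if (i < x.1 ∧ x.1 < j) ∨ (i < x.2 ∧ x.2 < j) then x else Prod.map (swap i j) (swap i j) x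

lemma swapPair_involutive (i j : Fin n) : Function.Involutive (swapPair i j) := by
  rintro ⟨p, q⟩
  simp only [swapPair, Prod.map, swap_apply_def]
  split_ifs <;> grind

lemma mem_permInversions_mul_swap {u : Perm (Fin n)} {i j : Fin n} (hij : i < j)
    (hu : u i < u j) (hgap : ∀ k, i < k → k < j → u k < u i ∨ u j < u k)
    (x : Fin n × Fin n) :
    x ∈ permInversions (u * swap i j) ↔ x = (i, j) ∨ swapPair i j x ∈ permInversions u := by
  obtain ⟨p, q⟩ := x
  have hp := hgap p
  have hq := hgap q
  simp only [permInversions, swapPair, Finset.mem_filter, Finset.mem_univ, true_and,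
    Perm.mul_apply, Prod.map, swap_apply_def]
  split_ifs <;> grind

lemma permLength_mul_swap {u : Perm (Fin n)} {i j : Fin n} (hij : i < j)
    (hu : u i < u j) (hgap : ∀ k, i < k → k < j → u k < u i ∨ u j < u k) :
    permLength (u * swap i j) = permLength u + 1 := by
  set e := (swapPair_involutive i j).toPerm
  have he : e.symm = e := Function.Involutive.toPerm_symm _
  have hinv : permInversions (u * swap i j) =
      insert (i, j) ((permInversions u).map e.toEmbedding) := by
    ext x
    rw [mem_permInversions_mul_swap hij hu hgap, Finset.mem_insert, Finset.mem_map_equiv, he]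
    rfl
  have hnotMem : (i, j) ∉ (permInversions u).map e.toEmbedding := by
    simp [Finset.mem_map_equiv, he, e, swapPair, permInversions, hij.not_gt]
  change (permInversions _).card = (permInversions u).card + 1
  rw [hinv, Finset.card_insert_of_notMem hnotMem, Finset.card_map]

lemma bruhatLE_mul_swap {u : Perm (Fin n)} {i j : Fin n} (hij : i < j) (hu : u i < u j) :
    BruhatLE u (u * swap i j) := by
  induction hd : (j : ℕ) - i using Nat.strong_induction_on generalizing u i j with
  | _ d ih =>
  by_cases hmid : ∃ k, i < k ∧ k < j ∧ u i < u k ∧ u k < u j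
  · obtain ⟨k, hik, hkj, hik', hkj'⟩ := hmid
    have hji : j ≠ i := hij.ne'
    have hjk : j ≠ k := hkj.ne'
    have hd₁ : (k : ℕ) - i < d := by omega
    have hd₂ : (j : ℕ) - k < d := by omega
    -- `u * swap i j = u * swap i k * swap k j * swap i k`, each step going up over a shorter span
    set u₁ := u * swap i k
    set u₂ := u₁ * swap k j
    have h₁ : BruhatLE u u₁ := ih _ hd₁ hik hik' rfl
    have h₂ : BruhatLE u₁ u₂ :=
      ih _ hd₂ hkj (by simpa [u₁, swap_apply_of_ne_of_ne hji hjk]) rfl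
    have h₃ : BruhatLE u₂ (u₂ * swap i k) :=
      ih _ hd₁ hik (by simpa [u₁, u₂, swap_apply_of_ne_of_ne hik.ne hij.ne,
        swap_apply_of_ne_of_ne hji hjk]) rfl
    have hconj : swap i k * swap k j * swap i k = swap i j := by
      rw [swap_comm i k, swap_comm k j]
      exact swap_mul_swap_mul_swap hjk hji
    have hu₂ : u₂ * swap i k = u * swap i j := by
      simp only [u₂, u₁, ← hconj, mul_assoc]
    exact hu₂ ▸ (h₁.trans h₂).trans h₃
  · push Not at hmid
    refine .single ⟨⟨i, j, hij.ne, rfl⟩, permLength_mul_swap hij hu fun k hik hkj => ?_⟩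
    exact (lt_or_gt_of_ne (u.injective.ne hik.ne')).imp_right fun h =>
      (hmid k hik hkj h).lt_of_ne (u.injective.ne hkj.ne')

lemma BruhatLE.eq_or_permLength_lt {a b : Perm (Fin n)} (h : BruhatLE a b) :
    a = b ∨ permLength a < permLength b := by
  induction h with
  | refl => exact .inl rfl
  | tail _ hstep ih =>
    obtain ⟨-, hlen⟩ := hstep
    rcases ih with rfl | hlt <;> omega

section TieSorted

variable {κ : Type*} {lam : Fin n → κ}

def IsTieSorted (lam : Fin n → κ) (τ : Perm (Fin n)) : Prop :=
  ∀ ⦃x y⦄, x < y → lam (τ x) = lam (τ y) → τ x < τ y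

lemma exists_bruhatLE_permLength_lt_of_not_isTieSorted {τ : Perm (Fin n)}
    (h : ¬IsTieSorted lam τ) :
    ∃ τ', (∀ i, lam (τ' i) = lam (τ i)) ∧ BruhatLE τ' τ ∧
      permLength τ' < permLength τ := by
  simp only [IsTieSorted, not_forall, not_lt] at h
  obtain ⟨x, y, hxy, htie, hyx⟩ := h
  have hyx : τ y < τ x := hyx.lt_of_ne (τ.injective.ne hxy.ne')
  have hle : BruhatLE (τ * swap x y) τ := by
    simpa [mul_assoc] using bruhatLE_mul_swap (u := τ * swap x y) hxy (by simpa using hyx)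
  have hne : τ * swap x y ≠ τ := fun h => hyx.ne (by simpa using congrArg (· x) h)
  refine ⟨τ * swap x y, fun i => ?_, hle, hle.eq_or_permLength_lt.resolve_left hne⟩
  simp only [Perm.mul_apply, swap_apply_def]
  split_ifs <;> simp_all

lemma IsTieSorted.apply_le_of_forall_lt_eq {π₁ π₂ : Perm (Fin n)}
    (h₂ : IsTieSorted lam π₂)
    (h : ∀ i, lam (π₁ i) = lam (π₂ i)) {x : Fin n} (hbelow : ∀ y < x, π₁ y = π₂ y) :
    π₂ x ≤ π₁ x := by
  by_contra! hlt
  obtain ⟨y, hy⟩ := π₂.surjective (π₁ x)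
  rcases lt_trichotomy y x with hyx | rfl | hxy
  · exact hyx.ne (π₁.injective ((hbelow y hyx).trans hy))
  · exact hlt.ne' hy
  · exact (h₂ hxy (by rw [hy, ← h])).not_gt (hy ▸ hlt)

lemma IsTieSorted.eq {π₁ π₂ : Perm (Fin n)} (h₁ : IsTieSorted lam π₁)
    (h₂ : IsTieSorted lam π₂)
    (h : ∀ i, lam (π₁ i) = lam (π₂ i)) : π₁ = π₂ := by
  refine Equiv.ext fun x => ?_
  induction x using WellFoundedLT.induction with
  | _ x ih =>
  exact le_antisymm (h₁.apply_le_of_forall_lt_eq (fun i => (h i).symm) fun y hy => (ih y hy).symm)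
    (h₂.apply_le_of_forall_lt_eq h ih)

theorem bruhatLE_of_forall_permLength_le {f : Fin n → κ} {w τ : Perm (Fin n)}
    (hw : ∀ i, lam (w i) = f i)
    (hmin : ∀ τ : Perm (Fin n), (∀ i, lam (τ i) = f i) → permLength w ≤ permLength τ)
    (hτ : ∀ i, lam (τ i) = f i) : BruhatLE w τ := by
  have hsorted : IsTieSorted lam w := by
    by_contra hw'
    obtain ⟨w', hw'f, -, hlt⟩ := exists_bruhatLE_permLength_lt_of_not_isTieSorted hw'
    exact (hmin w' fun i => (hw'f i).trans (hw i)).not_gt hlt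
  induction hℓ : permLength τ using Nat.strong_induction_on generalizing τ with
  | _ m ih =>
  by_cases hτs : IsTieSorted lam τ
  · exact hsorted.eq hτs (fun i => (hw i).trans (hτ i).symm) ▸ .refl
  · obtain ⟨τ', hτ'f, hle, hlt⟩ := exists_bruhatLE_permLength_lt_of_not_isTieSorted hτs
    exact (ih _ (hℓ ▸ hlt) (fun i => (hτ'f i).trans (hτ i)) rfl).trans hle

end TieSorted

theorem minimal_perm_le_of_bruhat_general (n : ℕ) (lam β : Fin n → ℕ)
    (wα : Equiv.Perm (Fin n))
    (σ : Equiv.Perm (Fin n)) (hσ : BruhatLE σ wα)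
    (hβ : ∀ i, β i = lam (σ i))
    (wβ : Equiv.Perm (Fin n)) (hwβ : ∀ i, lam (wβ i) = β i)
    (hminβ : ∀ τ : Equiv.Perm (Fin n), (∀ i, lam (τ i) = β i) →
      permLength wβ ≤ permLength τ) :
    BruhatLE wβ wα :=
  (bruhatLE_of_forall_permLength_le hwβ hminβ fun i => (hβ i).symm).trans hσ

/-- Let `lam` be the decreasing rearrangement of the composition `α` and `wα`
the shortest permutation with `lam·wα = α` (where `(v·w)_i = v_{w(i)}`).  For
any `σ ≤ wα` in Bruhat order, the composition `β = lam·σ` satisfies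
`w(β) ≤ wα` in Bruhat order (here `wβ` denotes the shortest permutation with
`lam·wβ = β`; note `λ(β) = λ(α) = lam`). -/
theorem minimal_perm_le_of_bruhat (n : ℕ) (α lam β : Fin n → ℕ)
    (hanti : Antitone lam)
    (wα : Equiv.Perm (Fin n)) (hwα : ∀ i, lam (wα i) = α i)
    (hmin : ∀ τ : Equiv.Perm (Fin n), (∀ i, lam (τ i) = α i) →
      permLength wα ≤ permLength τ)
    (σ : Equiv.Perm (Fin n)) (hσ : BruhatLE σ wα)
    (hβ : ∀ i, β i = lam (σ i))
    (wβ : Equiv.Perm (Fin n)) (hwβ : ∀ i, lam (wβ i) = β i)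
    (hminβ : ∀ τ : Equiv.Perm (Fin n), (∀ i, lam (τ i) = β i) →
      permLength wβ ≤ permLength τ) :
    BruhatLE wβ wα :=
  minimal_perm_le_of_bruhat_general n lam β wα σ hσ hβ wβ hwβ hminβ
end

section
/- Let α be a composition with α_r < α_{r+1}, and let w ∈ S_n be a permutation in which the value r appears before the value r+1 (i.e., w^{-1}(r) < w^{-1}(r+1)). Then x(w) = x(s_r w)·s_r, where x(w) is the vertex vector of the Schubitope S_{D(α)} counting appearances of each value in the greedy filling F_w(D(α)), s_r w swaps the values r and r+1 in w, and v·s_r swaps coordinates r and r+1 of v. -/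
/-!
Columns are filled independently, so it suffices to compare, in a single column `C`, the greedy
fillings by the words `… a … b …` and `… b … a …`, where `b = a + 1` and `a ∈ C → b ∈ C`.
Up to the first of `a`, `b` the two fillings agree, and greediness forces row `b` to be free
whenever row `a` is a free box of `C`. From then on the value counts of the two fillings agree up
to exchanging `a` and `b`, while the occupied rows either coincide (with row `a` occupied if it
lies in `C`) or differ only by row `a` in the first filling versus row `b` in the second. Since
`a` and `b` are adjacent, another value can only notice the difference by landing in row `b`,
respectively row `a`, which realigns the rows; inserting the second of `a`, `b` realigns them too.
-/

/-- Column `j` (0-indexed) of the skyline diagram of `α`. -/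
def skyCol {n : ℕ} (α : Fin n → ℕ) (j : Fin n) : Finset (Fin n) :=
  Finset.univ.filter (fun i => (j : ℕ) < α i)

/-- One greedy step on a column `C`: place `v` into the topmost empty box of
`C` with row index `≥ v`, skipping if none exists. -/
def fillStep {n : ℕ} (C : Finset (Fin n)) (st : Finset (Fin n × Fin n)) (v : Fin n) :
    Finset (Fin n × Fin n) :=
  let avail := (C \ st.image Prod.fst).filter (fun i => v ≤ i)
  if h : avail.Nonempty then insert (avail.min' h, v) st else st

/-- The greedy filling `F_w(C)` of a column `C` by the one-line word of `w`. -/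
def fillCol {n : ℕ} (C : Finset (Fin n)) (w : Equiv.Perm (Fin n)) :
    Finset (Fin n × Fin n) :=
  ((List.finRange n).map w).foldl (fillStep C) ∅

/-- `x(w)_k` = number of appearances of the value `k` in `F_w(D(α))`. -/
def xvec {n : ℕ} (α : Fin n → ℕ) (w : Equiv.Perm (Fin n)) : Fin n → ℕ :=
  fun k => ∑ j : Fin n, ((fillCol (skyCol α j) w).filter (fun p => p.2 = k)).card

theorem List.exists_eq_append_cons_append_cons_of_sublist {α : Type*} {a b : α} {l : List α}
    (h : [a, b].Sublist l) : ∃ l₁ l₂ l₃, l = l₁ ++ a :: (l₂ ++ b :: l₃) := by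
  obtain ⟨r₁, r₂, rfl, har, hbr⟩ := List.cons_sublist_iff.1 h
  obtain ⟨l₁, s, rfl⟩ := List.mem_iff_append.1 har
  obtain ⟨t, l₃, rfl⟩ := List.mem_iff_append.1 (List.singleton_sublist.1 hbr)
  exact ⟨l₁, s ++ t, l₃, by simp⟩

theorem List.map_swap_of_notMem {α : Type*} [DecidableEq α] {a b : α} {l : List α}
    (ha : a ∉ l) (hb : b ∉ l) : l.map (Equiv.swap a b) = l :=
  (List.map_congr_left fun _ hx => Equiv.swap_apply_of_ne_of_ne (ne_of_mem_of_not_mem hx ha)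
    (ne_of_mem_of_not_mem hx hb)).trans l.map_id

namespace GreedyFilling

open Equiv Finset

variable {n : ℕ} {C R : Finset (Fin n)} {st st' : Finset (Fin n × Fin n)} {a b v v' m k : Fin n}

def rows (st : Finset (Fin n × Fin n)) : Finset (Fin n) := st.image Prod.fst

def count (st : Finset (Fin n × Fin n)) (k : Fin n) : ℕ := #(st.filter fun p => p.2 = k)

def avail (C R : Finset (Fin n)) (v : Fin n) : Finset (Fin n) := (C \ R).filter (v ≤ ·)

lemma mem_avail : m ∈ avail C R v ↔ m ∈ C ∧ m ∉ R ∧ v ≤ m := by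
  simp [avail, and_assoc]

lemma avail_insert (C R : Finset (Fin n)) (v m : Fin n) :
    avail C (insert m R) v = (avail C R v).erase m := by
  simp only [avail, sdiff_insert, filter_erase]

lemma isLeast_avail_self (hv : v ∈ C) (hfree : v ∉ R) : IsLeast (avail C R v : Set (Fin n)) v :=
  ⟨mem_avail.2 ⟨hv, hfree, le_rfl⟩, fun _ hm => (mem_avail.1 hm).2.2⟩

lemma avail_eq_empty_or_exists_isLeast (C R : Finset (Fin n)) (v : Fin n) :
    avail C R v = ∅ ∨ ∃ m, IsLeast (avail C R v : Set (Fin n)) m :=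
  (avail C R v).eq_empty_or_nonempty.imp_right fun h => ⟨_, isLeast_min' _ h⟩

lemma avail_eq_of_covBy (hab : a ⋖ b) (ha : a ∈ C → a ∈ R) : avail C R a = avail C R b := by
  ext m
  simp only [mem_avail]
  constructor
  · rintro ⟨hm, hmR, ham⟩
    exact ⟨hm, hmR, hab.ge_of_gt (ham.lt_of_ne (by rintro rfl; exact hmR (ha hm)))⟩
  · rintro ⟨hm, hmR, hbm⟩
    exact ⟨hm, hmR, hab.le.trans hbm⟩

lemma fillStep_of_avail_eq_empty (h : avail C (rows st) v = ∅) : fillStep C st v = st :=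
  dif_neg (not_nonempty_iff_eq_empty.2 h)

lemma fillStep_of_isLeast (h : IsLeast (avail C (rows st) v : Set (Fin n)) m) :
    fillStep C st v = insert (m, v) st := by
  have hne : (avail C (rows st) v).Nonempty := ⟨m, h.1⟩
  calc fillStep C st v = insert ((avail C (rows st) v).min' hne, v) st := dif_pos hne
    _ = insert (m, v) st := by rw [(isLeast_min' _ hne).unique h]

lemma rows_insert (p : Fin n × Fin n) (st : Finset (Fin n × Fin n)) :
    rows (insert p st) = insert p.1 (rows st) :=
  image_insert _ _ _

@[simp]
lemma count_empty (k : Fin n) : count ∅ k = 0 := rfl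

lemma count_eq_zero : count st k = 0 ↔ ∀ p ∈ st, p.2 ≠ k := by
  rw [count, card_eq_zero, filter_eq_empty_iff]

lemma count_insert (hm : m ∉ rows st) (v k : Fin n) :
    count (insert (m, v) st) k = count st k + if v = k then 1 else 0 := by
  have hmv : (m, v) ∉ st := fun h => hm (mem_image_of_mem Prod.fst h)
  rw [count, filter_insert]
  split_ifs
  · rw [card_insert_of_notMem (fun h => hmv (mem_of_mem_filter _ h)), count]
  · rfl

lemma count_fillStep (C : Finset (Fin n)) (st : Finset (Fin n × Fin n)) (v k : Fin n) :
    count (fillStep C st v) k =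
      count st k + if (avail C (rows st) v).Nonempty ∧ v = k then 1 else 0 := by
  obtain h | ⟨m, hm⟩ := avail_eq_empty_or_exists_isLeast C (rows st) v
  · simp [fillStep_of_avail_eq_empty h, h]
  · rw [fillStep_of_isLeast hm, count_insert (mem_avail.1 hm.1).2.1,
      if_congr (and_iff_right ⟨m, hm.1⟩) rfl rfl]

lemma count_foldl_of_notMem {L : List (Fin n)} (hk : k ∉ L) (st : Finset (Fin n × Fin n)) :
    count (L.foldl (fillStep C) st) k = count st k := by
  induction L generalizing st with
  | nil => rfl
  | cons v L ih =>
    have hvk : v ≠ k := fun h => hk (h ▸ List.mem_cons_self)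
    rw [List.foldl_cons, ih (fun h => hk (List.mem_cons_of_mem v h)), count_fillStep,
      if_neg fun h => hvk h.2, add_zero]

lemma rows_subset_rows_fillStep (C : Finset (Fin n)) (st : Finset (Fin n × Fin n)) (v : Fin n) :
    rows st ⊆ rows (fillStep C st v) := by
  obtain h | ⟨m, hm⟩ := avail_eq_empty_or_exists_isLeast C (rows st) v
  · rw [fillStep_of_avail_eq_empty h]
  · rw [fillStep_of_isLeast hm, rows_insert]
    exact subset_insert _ _

lemma rows_fillStep_congr (hR : rows st = rows st')
    (hA : avail C (rows st) v = avail C (rows st') v') :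
    rows (fillStep C st v) = rows (fillStep C st' v') := by
  obtain h | ⟨m, hm⟩ := avail_eq_empty_or_exists_isLeast C (rows st) v
  · rw [fillStep_of_avail_eq_empty h, fillStep_of_avail_eq_empty (hA ▸ h), hR]
  · rw [fillStep_of_isLeast hm, fillStep_of_isLeast (hA ▸ hm), rows_insert, rows_insert, hR]

def IsGreedy (C : Finset (Fin n)) (st : Finset (Fin n × Fin n)) : Prop :=
  ∀ p ∈ st, p.2 ≤ p.1 ∧ ∀ e ∈ C, p.2 ≤ e → e < p.1 → e ∈ rows st

lemma isGreedy_fillStep (h : IsGreedy C st) (v : Fin n) : IsGreedy C (fillStep C st v) := by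
  obtain hA | ⟨m, hm⟩ := avail_eq_empty_or_exists_isLeast C (rows st) v
  · rwa [fillStep_of_avail_eq_empty hA]
  rw [fillStep_of_isLeast hm]
  intro p hp
  rw [rows_insert]
  obtain rfl | hp := mem_insert.1 hp
  · refine ⟨(mem_avail.1 hm.1).2.2, fun e he hve hem => ?_⟩
    by_contra hfree
    exact (hm.2 (mem_avail.2 ⟨he, fun h => hfree (mem_insert_of_mem h), hve⟩)).not_gt hem
  · exact ⟨(h p hp).1, fun e he hpe hep => mem_insert_of_mem ((h p hp).2 e he hpe hep)⟩

lemma isGreedy_empty : IsGreedy C ∅ := fun _ h => absurd h (notMem_empty _)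

lemma isGreedy_foldl (L : List (Fin n)) (h : IsGreedy C st) :
    IsGreedy C (L.foldl (fillStep C) st) := by
  induction L generalizing st with
  | nil => exact h
  | cons v L ih => exact ih (isGreedy_fillStep h v)

lemma IsGreedy.notMem_rows (h : IsGreedy C st) (hab : a ⋖ b) (ha : a ∈ C) (hfree : a ∉ rows st)
    (hb : count st b = 0) : b ∉ rows st := by
  intro hbr
  obtain ⟨p, hp, rfl⟩ := mem_image.1 hbr
  have hpa : p.2 ≤ a := hab.le_of_lt ((h p hp).1.lt_of_ne (count_eq_zero.1 hb p hp))
  exact hfree ((h p hp).2 a ha hpa hab.lt)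

def CountsSwapped (a b : Fin n) (st st' : Finset (Fin n × Fin n)) : Prop :=
  ∀ k, count st k = count st' (swap a b k)

lemma countsSwapped_self (ha : count st a = 0) (hb : count st b = 0) : CountsSwapped a b st st := by
  intro k
  rcases eq_or_ne k a with rfl | hka
  · rw [swap_apply_left, ha, hb]
  rcases eq_or_ne k b with rfl | hkb
  · rw [swap_apply_right, ha, hb]
  rw [swap_apply_of_ne_of_ne hka hkb]

lemma countsSwapped_fillStep (h : CountsSwapped a b st st') (hv : v' = swap a b v)
    (hplaced : (avail C (rows st) v).Nonempty ↔ (avail C (rows st') v').Nonempty) :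
    CountsSwapped a b (fillStep C st v) (fillStep C st' v') := by
  intro k
  simp only [count_fillStep, h k, hplaced, hv, (swap a b).apply_eq_iff_eq]

def RowsAligned (C : Finset (Fin n)) (a : Fin n) (st st' : Finset (Fin n × Fin n)) : Prop :=
  rows st = rows st' ∧ (a ∈ C → a ∈ rows st)

def RowsShifted (C : Finset (Fin n)) (a b : Fin n) (st st' : Finset (Fin n × Fin n)) : Prop :=
  a ∈ C ∧ b ∈ C ∧ ∃ O, a ∉ O ∧ b ∉ O ∧ rows st = insert a O ∧ rows st' = insert b O

/-- Relates the fillings of a column by the words `… a … b …` and `… b … a …` from the first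
occurrence of `a` or `b` on. -/
def SwapRel (C : Finset (Fin n)) (a b : Fin n) (st st' : Finset (Fin n × Fin n)) : Prop :=
  CountsSwapped a b st st' ∧ (RowsAligned C a st st' ∨ RowsShifted C a b st st')

lemma swapRel_fillStep_of_aligned (hc : CountsSwapped a b st st') (hr : RowsAligned C a st st')
    (hv : v' = swap a b v) (hA : avail C (rows st) v = avail C (rows st') v') :
    SwapRel C a b (fillStep C st v) (fillStep C st' v') :=
  ⟨countsSwapped_fillStep hc hv (by rw [hA]),
    Or.inl ⟨rows_fillStep_congr hr.1 hA, fun ha => rows_subset_rows_fillStep C st v (hr.2 ha)⟩⟩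

lemma swapRel_fillStep_of_shifted_of_isLeast_eq (hc : CountsSwapped a b st st')
    (hr : RowsShifted C a b st st') (hva : v ≠ a) (hvb : v ≠ b)
    (hm : IsLeast (avail C (rows st) v : Set (Fin n)) m)
    (hm' : IsLeast (avail C (rows st') v : Set (Fin n)) m) :
    SwapRel C a b (fillStep C st v) (fillStep C st' v) := by
  obtain ⟨haC, hbC, O, haO, hbO, hst, hst'⟩ := hr
  have hma : m ≠ a := fun h => (mem_avail.1 hm.1).2.1 (hst ▸ h ▸ mem_insert_self a O)
  have hmb : m ≠ b := fun h => (mem_avail.1 hm'.1).2.1 (hst' ▸ h ▸ mem_insert_self b O)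
  refine ⟨countsSwapped_fillStep hc (swap_apply_of_ne_of_ne hva hvb).symm
    (iff_of_true ⟨m, hm.1⟩ ⟨m, hm'.1⟩), Or.inr ⟨haC, hbC, insert m O, ?_, ?_, ?_, ?_⟩⟩
  · simpa [hma.symm] using haO
  · simpa [hmb.symm] using hbO
  · rw [fillStep_of_isLeast hm, rows_insert, hst, insert_comm]
  · rw [fillStep_of_isLeast hm', rows_insert, hst', insert_comm]

lemma swapRel_fillStep_of_shifted_of_isLeast_swap (hc : CountsSwapped a b st st')
    (hr : RowsShifted C a b st st') (hv : v' = swap a b v)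
    (hb : IsLeast (avail C (rows st) v : Set (Fin n)) b)
    (ha : IsLeast (avail C (rows st') v' : Set (Fin n)) a) :
    SwapRel C a b (fillStep C st v) (fillStep C st' v') := by
  obtain ⟨-, -, O, -, -, hst, hst'⟩ := hr
  refine ⟨countsSwapped_fillStep hc hv (iff_of_true ⟨b, hb.1⟩ ⟨a, ha.1⟩), Or.inl ⟨?_, fun _ => ?_⟩⟩
  · rw [fillStep_of_isLeast hb, fillStep_of_isLeast ha, rows_insert, rows_insert, hst, hst',
      insert_comm]
  · rw [fillStep_of_isLeast hb, rows_insert, hst]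
    exact mem_insert_of_mem (mem_insert_self a O)

lemma swapRel_fillStep_of_shifted (hab : a ⋖ b) (hc : CountsSwapped a b st st')
    (hr : RowsShifted C a b st st') (hva : v ≠ a) (hvb : v ≠ b) :
    SwapRel C a b (fillStep C st v) (fillStep C st' v) := by
  have ⟨haC, hbC, O, haO, hbO, hst, hst'⟩ := hr
  have hA : avail C (rows st) v = (avail C O v).erase a := by rw [hst, avail_insert]
  have hA' : avail C (rows st') v = (avail C O v).erase b := by rw [hst', avail_insert]
  by_cases hav : v ≤ a
  · -- If the topmost box of `C \ O` in a row `≥ v` lies above row `a`, both fillings use it;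
    -- if it is row `a`, the first filling, where row `a` is taken, uses row `b` instead.
    have haA : a ∈ avail C O v := mem_avail.2 ⟨haC, haO, hav⟩
    have hbA : b ∈ avail C O v := mem_avail.2 ⟨hbC, hbO, hav.trans hab.le⟩
    obtain ⟨m, hm⟩ : ∃ m, IsLeast (avail C O v : Set (Fin n)) m := ⟨_, isLeast_min' _ ⟨a, haA⟩⟩
    obtain rfl | hma := eq_or_ne m a
    · refine swapRel_fillStep_of_shifted_of_isLeast_swap hc hr
        (swap_apply_of_ne_of_ne hva hvb).symm ?_ ?_
      · rw [hA]
        refine ⟨mem_erase.2 ⟨hab.lt.ne', hbA⟩, fun x hx => ?_⟩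
        obtain ⟨hxm, hx⟩ := mem_erase.1 hx
        exact hab.ge_of_gt ((hm.2 hx).lt_of_ne hxm.symm)
      · rw [hA']
        exact ⟨mem_erase.2 ⟨hab.lt.ne, haA⟩, fun x hx => hm.2 (mem_of_mem_erase hx)⟩
    · have hmb : m ≠ b := ((hm.2 haA).trans_lt hab.lt).ne
      refine swapRel_fillStep_of_shifted_of_isLeast_eq (m := m) hc hr hva hvb ?_ ?_
      · rw [hA]
        exact ⟨mem_erase.2 ⟨hma, hm.1⟩, fun x hx => hm.2 (mem_of_mem_erase hx)⟩
      · rw [hA']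
        exact ⟨mem_erase.2 ⟨hmb, hm.1⟩, fun x hx => hm.2 (mem_of_mem_erase hx)⟩
  · -- rows `a` and `b` are above row `v`, so both fillings see the same free boxes
    have hbv : ¬ v ≤ b := fun h => hvb (h.antisymm (hab.ge_of_gt (not_le.1 hav)))
    have hA_eq : avail C (rows st) v = avail C (rows st') v := by
      rw [hA, hA', erase_eq_of_notMem fun h => hav (mem_avail.1 h).2.2,
        erase_eq_of_notMem fun h => hbv (mem_avail.1 h).2.2]
    obtain h | ⟨m, hm⟩ := avail_eq_empty_or_exists_isLeast C (rows st) v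
    · rw [fillStep_of_avail_eq_empty h, fillStep_of_avail_eq_empty (hA_eq ▸ h)]
      exact ⟨hc, Or.inr hr⟩
    · exact swapRel_fillStep_of_shifted_of_isLeast_eq hc hr hva hvb hm (hA_eq ▸ hm)

lemma swapRel_fillStep (hab : a ⋖ b) (hva : v ≠ a) (hvb : v ≠ b) (h : SwapRel C a b st st') :
    SwapRel C a b (fillStep C st v) (fillStep C st' v) := by
  obtain ⟨hc, hr | hr⟩ := h
  · exact swapRel_fillStep_of_aligned hc hr (swap_apply_of_ne_of_ne hva hvb).symm (by rw [hr.1])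
  · exact swapRel_fillStep_of_shifted hab hc hr hva hvb

lemma swapRel_foldl (hab : a ⋖ b) {L : List (Fin n)} (ha : a ∉ L) (hb : b ∉ L)
    (h : SwapRel C a b st st') :
    SwapRel C a b (L.foldl (fillStep C) st) (L.foldl (fillStep C) st') := by
  induction L generalizing st st' with
  | nil => exact h
  | cons v L ih =>
    simp only [List.mem_cons, not_or] at ha hb
    exact ih ha.2 hb.2 (swapRel_fillStep hab (Ne.symm ha.1) (Ne.symm hb.1) h)

lemma swapRel_fillStep_of_isGreedy (hab : a ⋖ b) (hC : a ∈ C → b ∈ C) (hG : IsGreedy C st)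
    (ha : count st a = 0) (hb : count st b = 0) :
    SwapRel C a b (fillStep C st a) (fillStep C st b) := by
  have hc := countsSwapped_self ha hb
  have hv : b = swap a b a := (swap_apply_left a b).symm
  by_cases hfree : a ∈ C ∧ a ∉ rows st
  · obtain ⟨haC, haR⟩ := hfree
    have hbR := hG.notMem_rows hab haC haR hb
    refine ⟨countsSwapped_fillStep hc hv (iff_of_true ⟨a, (isLeast_avail_self haC haR).1⟩
      ⟨b, (isLeast_avail_self (hC haC) hbR).1⟩), Or.inr ⟨haC, hC haC, rows st, haR, hbR, ?_, ?_⟩⟩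
    · rw [fillStep_of_isLeast (isLeast_avail_self haC haR), rows_insert]
    · rw [fillStep_of_isLeast (isLeast_avail_self (hC haC) hbR), rows_insert]
  · have hr : RowsAligned C a st st := ⟨rfl, fun haC => not_not.1 fun haR => hfree ⟨haC, haR⟩⟩
    exact swapRel_fillStep_of_aligned hc hr hv (avail_eq_of_covBy hab hr.2)

lemma swapRel_fillStep_swap (hab : a ⋖ b) (h : SwapRel C a b st st') :
    SwapRel C a b (fillStep C st b) (fillStep C st' a) := by
  have hv : a = swap a b b := (swap_apply_right a b).symm
  obtain ⟨hc, hr | hr⟩ := h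
  · exact swapRel_fillStep_of_aligned hc hr hv (by rw [← hr.1, avail_eq_of_covBy hab hr.2])
  · have ⟨haC, hbC, O, haO, hbO, hst, hst'⟩ := hr
    refine swapRel_fillStep_of_shifted_of_isLeast_swap hc hr hv
      (isLeast_avail_self hbC ?_) (isLeast_avail_self haC ?_)
    · simpa [hst, hab.lt.ne'] using hbO
    · simpa [hst', hab.lt.ne] using haO

theorem count_foldl_map_swap (hab : a ⋖ b) (hC : a ∈ C → b ∈ C) {L : List (Fin n)}
    (hL : L.Nodup) (hsub : [a, b].Sublist L) (k : Fin n) :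
    count (L.foldl (fillStep C) ∅) k =
      count ((L.map (swap a b)).foldl (fillStep C) ∅) (swap a b k) := by
  obtain ⟨L₁, L₂, L₃, rfl⟩ := List.exists_eq_append_cons_append_cons_of_sublist hsub
  rw [List.nodup_middle, List.nodup_cons, ← List.append_assoc, List.nodup_middle,
    List.nodup_cons] at hL
  simp only [List.mem_append, List.mem_cons, not_or] at hL
  obtain ⟨⟨⟨ha₁, ha₂⟩, -, ha₃⟩, ⟨⟨hb₁, hb₂⟩, hb₃⟩, -⟩ := hL
  rw [List.map_append, List.map_cons, List.map_append, List.map_cons, swap_apply_left,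
    swap_apply_right, List.map_swap_of_notMem ha₁ hb₁, List.map_swap_of_notMem ha₂ hb₂,
    List.map_swap_of_notMem ha₃ hb₃]
  simp only [List.foldl_append, List.foldl_cons]
  exact (swapRel_foldl hab ha₃ hb₃ (swapRel_fillStep_swap hab (swapRel_foldl hab ha₂ hb₂
    (swapRel_fillStep_of_isGreedy hab hC (isGreedy_foldl L₁ isGreedy_empty)
      (count_foldl_of_notMem ha₁ ∅) (count_foldl_of_notMem hb₁ ∅))))).1 k

end GreedyFilling

/-- If `α_r < α_{r+1}` and the value `r` appears before `r+1` in the one-line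
notation of `w` (i.e. `w⁻¹(r) < w⁻¹(r+1)`), then `x(w) = x(s_r w)·s_r`, i.e.
`x(w)_k = x(s_r w)_{s_r(k)}` for every `k`. -/
theorem xvec_swap_values (n r : ℕ) (hr : r + 1 < n)
    (α : Fin n → ℕ) (s : Equiv.Perm (Fin n))
    (hs : s = Equiv.swap ⟨r, Nat.lt_of_succ_lt hr⟩ ⟨r + 1, hr⟩)
    (hlt : α ⟨r, Nat.lt_of_succ_lt hr⟩ < α ⟨r + 1, hr⟩)
    (w : Equiv.Perm (Fin n))
    (hw : w.symm ⟨r, Nat.lt_of_succ_lt hr⟩ < w.symm ⟨r + 1, hr⟩) :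
    ∀ k : Fin n, xvec α w k = xvec α (s * w) (s k) := by
  intro k
  subst hs
  set a : Fin n := ⟨r, Nat.lt_of_succ_lt hr⟩
  set b : Fin n := ⟨r + 1, hr⟩
  have hab : a ⋖ b := Fin.covBy_iff.2 (Nat.covBy_iff_add_one_eq.2 rfl)
  have hsub : [a, b].Sublist ((List.finRange n).map w) := by
    have : [w.symm a, w.symm b].Sublist (List.finRange n) :=
      List.sublist_of_subperm_of_pairwise (List.subperm_of_subset (by simp [hw.ne]) (by simp))
        (by simp [hw]) (List.pairwise_lt_finRange n)
    simpa using this.map w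
  refine Finset.sum_congr rfl fun j _ => ?_
  have hC : a ∈ skyCol α j → b ∈ skyCol α j := by
    simp only [skyCol, Finset.mem_filter, Finset.mem_univ, true_and]
    exact fun h => h.trans hlt
  have := GreedyFilling.count_foldl_map_swap hab hC ((List.nodup_finRange n).map w.injective)
    hsub k
  rwa [List.map_map, ← Equiv.Perm.coe_mul] at this
end

section
/- Let α be a composition with α_r < α_{r+1}, α' = α·s_r, and w ∈ S_n a permutation in which the value r appears before the value r+1. Then the vertex vectors agree: x(w) computed from D(α) equals x'(w) computed from D(α'). -/
/-!
Write `a = r`, `b = r + 1`. The columns of `D(α')` are the images of those of `D(α)` under the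
transposition `(a b)` of rows; since `α_a < α_b`, a column changes only if it contains row `b`
but not row `a`. For such a column `C`, moving the entries of row `b` to row `a` commutes with
every greedy step, because `(a b)` preserves the order of the rows of `C` and the comparisons
`v ≤ row` for `v ≠ b`. The one step where this could fail is the insertion of `b`, but `a` comes
earlier in `w` and, finding row `a` missing, lands in row `b` unless it is already filled; so by
then row `b` is occupied and the rows still available to `b` are fixed by `(a b)`. The two
fillings thus differ by a relabelling of rows, which keeps the number of entries equal to `k`.
-/

open Finset

theorem Finset.min'_image_of_monotoneOn {α β : Type*} [LinearOrder α] [LinearOrder β]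
    {f : α → β} {s : Finset α} (hf : MonotoneOn f s) (h : (s.image f).Nonempty) :
    (s.image f).min' h = f (s.min' h.of_image) := by
  refine le_antisymm (min'_le _ _ (mem_image_of_mem f (min'_mem _ _))) (le_min' _ _ _ ?_)
  simp only [mem_image, forall_exists_index, and_imp, forall_apply_eq_imp_iff₂]
  exact fun x hx => hf (min'_mem _ _) hx (min'_le _ _ hx)

theorem List.idxOf_map_of_injective {α β : Type*} [DecidableEq α] [DecidableEq β] {f : α → β}
    (hf : Function.Injective f) (l : List α) (x : α) : (l.map f).idxOf (f x) = l.idxOf x := by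
  induction l with
  | nil => rfl
  | cons y l ih =>
    by_cases hyx : y = x
    · simp [hyx]
    · simp [List.idxOf_cons_ne _ hyx, List.idxOf_cons_ne _ (hf.ne hyx), ih]

theorem Finset.image_swap_eq_self {α : Type*} [DecidableEq α] {s : Finset α} {a b : α}
    (h : a ∈ s ↔ b ∈ s) : s.image (Equiv.swap a b) = s := by
  have hswap : ∀ x, Equiv.swap a b x ∈ s ↔ x ∈ s := by
    intro x
    rw [Equiv.swap_apply_def]
    split_ifs <;> simp_all
  ext x
  rw [mem_image]
  exact ⟨fun ⟨y, hy, hyx⟩ => hyx ▸ (hswap y).2 hy,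
    fun hx => ⟨_, (hswap x).2 hx, Equiv.swap_apply_self a b x⟩⟩

section CovBy

variable {α : Type*} [LinearOrder α] [DecidableEq α] {a b : α}

theorem CovBy.strictMonoOn_swap (h : a ⋖ b) : StrictMonoOn (Equiv.swap a b) {a}ᶜ := by
  intro x hx y hy hxy
  simp only [Set.mem_compl_iff, Set.mem_singleton_iff] at hx hy
  rcases eq_or_ne x b with rfl | hxb
  · rw [Equiv.swap_apply_right, Equiv.swap_apply_of_ne_of_ne hy hxy.ne']
    exact h.lt.trans hxy
  rw [Equiv.swap_apply_of_ne_of_ne hx hxb]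
  rcases eq_or_ne y b with rfl | hyb
  · rw [Equiv.swap_apply_right]
    exact (h.le_of_lt hxy).lt_of_ne hx
  · rwa [Equiv.swap_apply_of_ne_of_ne hy hyb]

theorem CovBy.le_swap_iff (h : a ⋖ b) {v x : α} (hv : v ≠ b) (hx : x ≠ a) :
    v ≤ Equiv.swap a b x ↔ v ≤ x := by
  rcases eq_or_ne x b with rfl | hxb
  · rw [Equiv.swap_apply_right]
    exact ⟨fun hva => hva.trans h.le, fun hvx => h.le_of_lt (hvx.lt_of_ne hv)⟩
  · rw [Equiv.swap_apply_of_ne_of_ne hx hxb]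

end CovBy

section Filling

variable {n : ℕ}

def availRows (C : Finset (Fin n)) (st : Finset (Fin n × Fin n)) (v : Fin n) : Finset (Fin n) :=
  (C \ st.image Prod.fst).filter (fun i => v ≤ i)

theorem fillStep_eq_availRows (C : Finset (Fin n)) (st : Finset (Fin n × Fin n)) (v : Fin n) :
    fillStep C st v =
      if h : (availRows C st v).Nonempty then insert ((availRows C st v).min' h, v) st else st :=
  rfl

theorem image_fst_subset_image_fst_fillStep (C : Finset (Fin n)) (st : Finset (Fin n × Fin n))
    (v : Fin n) : st.image Prod.fst ⊆ (fillStep C st v).image Prod.fst := by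
  rw [fillStep_eq_availRows]
  split
  · exact image_subset_image (subset_insert _ _)
  · exact subset_rfl

def relabelRows (σ : Equiv.Perm (Fin n)) (st : Finset (Fin n × Fin n)) :
    Finset (Fin n × Fin n) :=
  st.image (Prod.map σ id)

theorem image_fst_relabelRows (σ : Equiv.Perm (Fin n)) (st : Finset (Fin n × Fin n)) :
    (relabelRows σ st).image Prod.fst = (st.image Prod.fst).image σ := by
  simp only [relabelRows, image_image]
  rfl

theorem card_filter_relabelRows (σ : Equiv.Perm (Fin n)) (st : Finset (Fin n × Fin n))
    (k : Fin n) :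
    ((relabelRows σ st).filter (fun p => p.2 = k)).card = (st.filter (fun p => p.2 = k)).card := by
  rw [relabelRows, filter_image]
  exact card_image_of_injective _ (σ.injective.prodMap Function.injective_id)

variable {a b : Fin n} {C : Finset (Fin n)}

theorem availRows_image_swap (hab : a ⋖ b) (haC : a ∉ C) {st : Finset (Fin n × Fin n)}
    {v : Fin n} (hv : v ≠ b ∨ b ∈ st.image Prod.fst) :
    availRows (C.image (Equiv.swap a b)) (relabelRows (Equiv.swap a b) st) v =
      (availRows C st v).image (Equiv.swap a b) := by
  rw [availRows, image_fst_relabelRows, ← image_sdiff _ _ (Equiv.swap a b).injective,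
    filter_image, availRows]
  congr 1
  refine filter_congr fun x hx => ?_
  obtain ⟨hxC, hxst⟩ := mem_sdiff.1 hx
  have hxa : x ≠ a := by rintro rfl; exact haC hxC
  rcases hv with hvb | hb
  · exact hab.le_swap_iff hvb hxa
  · rw [Equiv.swap_apply_of_ne_of_ne hxa (by rintro rfl; exact hxst hb)]

theorem fillStep_image_swap (hab : a ⋖ b) (haC : a ∉ C) {st : Finset (Fin n × Fin n)}
    {v : Fin n} (hv : v ≠ b ∨ b ∈ st.image Prod.fst) :
    fillStep (C.image (Equiv.swap a b)) (relabelRows (Equiv.swap a b) st) v =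
      relabelRows (Equiv.swap a b) (fillStep C st v) := by
  rw [fillStep_eq_availRows, fillStep_eq_availRows, availRows_image_swap hab haC hv]
  by_cases h : (availRows C st v).Nonempty
  · have hmono : MonotoneOn (Equiv.swap a b) (availRows C st v) :=
      hab.strictMonoOn_swap.monotoneOn.mono fun x hx (hxa : x = a) =>
        haC (hxa ▸ (mem_sdiff.1 (mem_filter.1 hx).1).1)
    rw [dif_pos (h.image _), dif_pos h, min'_image_of_monotoneOn hmono, relabelRows,
      relabelRows, image_insert]
    rfl
  · rw [dif_neg (by simpa using h), dif_neg h]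

theorem mem_image_fst_fillStep_of_covBy (hab : a ⋖ b) (haC : a ∉ C) (hbC : b ∈ C)
    (st : Finset (Fin n × Fin n)) : b ∈ (fillStep C st a).image Prod.fst := by
  by_cases hb : b ∈ st.image Prod.fst
  · exact image_fst_subset_image_fst_fillStep C st a hb
  have hbA : b ∈ availRows C st a := by simp [availRows, hbC, hb, hab.le]
  have hne : (availRows C st a).Nonempty := ⟨b, hbA⟩
  have hmin : (availRows C st a).min' hne = b := by
    have hm := min'_mem _ hne
    simp only [availRows, mem_filter, mem_sdiff] at hm
    refine le_antisymm (min'_le _ _ hbA) (hab.ge_of_gt (hm.2.lt_of_ne ?_))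
    rintro hma
    exact haC (hma ▸ hm.1.1)
  rw [fillStep_eq_availRows, dif_pos hne, hmin, image_insert]
  exact mem_insert_self _ _

theorem foldl_fillStep_image_swap (hab : a ⋖ b) (haC : a ∉ C) (hbC : b ∈ C)
    (l : List (Fin n)) (st : Finset (Fin n × Fin n))
    (h : b ∈ st.image Prod.fst ∨ l.idxOf a < l.idxOf b) :
    l.foldl (fillStep (C.image (Equiv.swap a b))) (relabelRows (Equiv.swap a b) st) =
      relabelRows (Equiv.swap a b) (l.foldl (fillStep C) st) := by
  induction l generalizing st with
  | nil => rfl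
  | cons v l ih =>
    have hv : v ≠ b ∨ b ∈ st.image Prod.fst := by
      rcases h with hb | hlt
      · exact .inr hb
      · exact .inl (by rintro rfl; simp at hlt)
    have hnext : b ∈ (fillStep C st v).image Prod.fst ∨ l.idxOf a < l.idxOf b := by
      rcases h with hb | hlt
      · exact .inl (image_fst_subset_image_fst_fillStep C st v hb)
      rcases eq_or_ne v a with rfl | hva
      · exact .inl (mem_image_fst_fillStep_of_covBy hab haC hbC st)
      · have hvb : v ≠ b := by rintro rfl; simp at hlt
        right
        simpa [List.idxOf_cons_ne _ hva, List.idxOf_cons_ne _ hvb] using hlt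
    rw [List.foldl_cons, List.foldl_cons, fillStep_image_swap hab haC hv]
    exact ih _ hnext

theorem fillCol_image_swap (hab : a ⋖ b) (haC : a ∉ C) (hbC : b ∈ C) (w : Equiv.Perm (Fin n))
    (hw : w.symm a < w.symm b) :
    fillCol (C.image (Equiv.swap a b)) w = relabelRows (Equiv.swap a b) (fillCol C w) := by
  have hidx : ∀ x, ((List.finRange n).map w).idxOf x = w.symm x := fun x => by
    simpa using List.idxOf_map_of_injective w.injective (List.finRange n) (w.symm x)
  have h := foldl_fillStep_image_swap hab haC hbC ((List.finRange n).map w) ∅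
    (.inr (by rw [hidx, hidx]; exact hw))
  rwa [relabelRows, image_empty] at h

end Filling

theorem skyCol_comp_perm {n : ℕ} (α : Fin n → ℕ) (σ : Equiv.Perm (Fin n)) (j : Fin n) :
    skyCol (fun i => α (σ i)) j = (skyCol α j).image σ.symm := by
  ext i
  simp only [skyCol, mem_filter, mem_univ, true_and, mem_image]
  exact ⟨fun h => ⟨σ i, h, σ.symm_apply_apply i⟩, by rintro ⟨x, hx, rfl⟩; simpa using hx⟩

/-- If `α_r < α_{r+1}`, `α' = α·s_r`, and the value `r` appears before `r+1`
in the one-line notation of `w`, then the vertex vectors computed from `D(α)`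
and from `D(α')` agree: `x(w) = x'(w)`. -/
theorem xvec_swap_composition (n r : ℕ) (hr : r + 1 < n)
    (α α' : Fin n → ℕ) (s : Equiv.Perm (Fin n))
    (hs : s = Equiv.swap ⟨r, Nat.lt_of_succ_lt hr⟩ ⟨r + 1, hr⟩)
    (hlt : α ⟨r, Nat.lt_of_succ_lt hr⟩ < α ⟨r + 1, hr⟩)
    (hα' : ∀ i, α' i = α (s i))
    (w : Equiv.Perm (Fin n))
    (hw : w.symm ⟨r, Nat.lt_of_succ_lt hr⟩ < w.symm ⟨r + 1, hr⟩) :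
    ∀ k : Fin n, xvec α w k = xvec α' w k := by
  intro k
  set a : Fin n := ⟨r, Nat.lt_of_succ_lt hr⟩
  set b : Fin n := ⟨r + 1, hr⟩
  have hab : a ⋖ b := Fin.covBy_iff.mpr (Nat.covBy_iff_add_one_eq.mpr rfl)
  have hcol : ∀ j, skyCol α' j = (skyCol α j).image (Equiv.swap a b) := fun j => by
    rw [show α' = fun i => α (s i) from funext hα', skyCol_comp_perm, hs, Equiv.symm_swap]
  refine sum_congr rfl fun j _ => ?_
  rw [hcol j]
  by_cases hja : (j : ℕ) < α a
  · rw [image_swap_eq_self (by simp [skyCol, hja, hja.trans hlt])]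
  by_cases hjb : (j : ℕ) < α b
  · rw [fillCol_image_swap hab (by simp [skyCol, hja]) (by simp [skyCol, hjb]) w hw,
      card_filter_relabelRows]
  · rw [image_swap_eq_self (by simp [skyCol, hja, hjb])]
end
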